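/- Lemma 9, part 2 (Scalar recursion: almost sure limits). Let 0 < a < 1, let (x_i)_{i≥1} be i.i.d. integrable real random variables with E(x_1) = m_x, and define y_i = a y_{i−1} + a x_i for i ≥ 1 with deterministic finite initial value y₀. Then the following hold: (i) y_i / i → 0 almost surely; (ii) (1/i) Σ_{j=1}^i y_j → a m_x / (1 − a) almost surely; and (iii) limsup_{i→∞} (1/i) Σ_{j=1}^i |y_j| < ∞ almost surely (indeed it is almost surely bounded by a E|x_1|/(1−a)). -/

import Mathlib

open MeasureTheory ProbabilityTheory Filter Topology

open Finset

/-!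
Everything happens along a single path. The strong law gives, almost surely, Cesàro convergence of
`x` and of `|x|`, hence `x n / n → 0`. Along such a path `u n = |y n| / n` satisfies
`u (n + 1) ≤ a * u n + a * |x (n + 1)| / (n + 1)` with a vanishing forcing term, so `u → 0` because
`a < 1`. Summing the recursion telescopes to
`(1 - a) * ∑ j ∈ Icc 1 n, y j = a * (y 0 - y n) + a * ∑ j ∈ Icc 1 n, x j`, which gives the Cesàro
limit of `y`; the same summation applied to `|y (n + 1)| ≤ a * |y n| + a * |x (n + 1)|` bounds the
averages of `|y|`.
-/

theorem sum_Icc_one_eq_sum_range {M : Type*} [AddCommMonoid M] (f : ℕ → M) (n : ℕ) :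
    ∑ j ∈ Icc 1 n, f j = ∑ i ∈ range n, f (i + 1) := by
  rw [← Ico_add_one_right_eq_Icc, sum_Ico_eq_sum_range]
  simp [add_comm]

theorem tendsto_div_succ_of_tendsto_avg {X : ℕ → ℝ} {m : ℝ}
    (hX : Tendsto (fun n : ℕ => (∑ j ∈ Icc 1 n, X j) / n) atTop (𝓝 m)) :
    Tendsto (fun n : ℕ => X (n + 1) / (n + 1)) atTop (𝓝 0) := by
  have hshift : Tendsto (fun n : ℕ => (∑ j ∈ Icc 1 (n + 1), X j) / (n + 1)) atTop (𝓝 m) := by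
    simpa using (tendsto_add_atTop_iff_nat 1).2 hX
  have hratio := hX.mul (tendsto_natCast_div_add_atTop (1 : ℝ))
  have hdiff := hshift.sub hratio
  rw [mul_one, sub_self] at hdiff
  refine hdiff.congr' ?_
  filter_upwards [eventually_gt_atTop 0] with n hn
  rw [sum_Icc_succ_top (by omega)]
  field_simp
  ring

theorem tendsto_zero_of_le_mul_add {a : ℝ} (ha0 : 0 ≤ a) (ha1 : a < 1) {v e : ℕ → ℝ}
    (hv : ∀ n, 0 ≤ v n) (hrec : ∀ᶠ n in atTop, v (n + 1) ≤ a * v n + e n)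
    (he : Tendsto e atTop (𝓝 0)) : Tendsto v atTop (𝓝 0) := by
  refine tendsto_order.2 ⟨fun b hb => Eventually.of_forall fun n => hb.trans_le (hv n),
    fun ε hε => ?_⟩
  obtain ⟨N, hN⟩ := eventually_atTop.1 (hrec.and
    (he.eventually (gt_mem_nhds (show 0 < (1 - a) * (ε / 2) by nlinarith))))
  -- past `N`, the excess of `v` over `ε / 2` contracts by the factor `a`
  have hdecay : ∀ n ≥ N, v n - ε / 2 ≤ a ^ (n - N) * (v N - ε / 2) := by
    intro n hn
    induction n, hn using Nat.le_induction with
    | base => simp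
    | succ n hn ih =>
      rw [Nat.sub_add_comm hn, pow_succ]
      nlinarith [hN n hn]
  have hlim : Tendsto (fun n : ℕ => a ^ (n - N) * (v N - ε / 2)) atTop (𝓝 0) := by
    simpa using ((tendsto_pow_atTop_nhds_zero_of_lt_one ha0 ha1).comp
      (tendsto_sub_atTop_nat N)).mul_const (v N - ε / 2)
  filter_upwards [eventually_ge_atTop N, hlim.eventually (gt_mem_nhds (half_pos hε))]
    with n hn hsmall
  linarith [hdecay n hn]

theorem isBoundedUnder_le_and_limsup_le_of_le_of_tendsto {α : Type*} {l : Filter α} [l.NeBot]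
    {f g : α → ℝ} {L : ℝ} (hf : ∀ i, 0 ≤ f i) (hfg : ∀ i, f i ≤ g i) (hg : Tendsto g l (𝓝 L)) :
    IsBoundedUnder (· ≤ ·) l f ∧ limsup f l ≤ L := by
  have hfg' : f ≤ᶠ[l] g := Eventually.of_forall hfg
  refine ⟨hg.isBoundedUnder_le.mono_le hfg', ?_⟩
  rw [← hg.limsup_eq]
  exact limsup_le_limsup hfg' (isCoboundedUnder_le_of_le l hf) hg.isBoundedUnder_le

section Recursion

variable {a : ℝ} {X Y : ℕ → ℝ}

theorem one_sub_mul_sum_Icc_of_rec (hY : ∀ n, Y (n + 1) = a * Y n + a * X (n + 1)) (n : ℕ) :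
    (1 - a) * ∑ j ∈ Icc 1 n, Y j = a * (Y 0 - Y n) + a * ∑ j ∈ Icc 1 n, X j := by
  induction n with
  | zero => simp
  | succ n ih =>
    rw [sum_Icc_succ_top (by omega), sum_Icc_succ_top (by omega), hY n]
    linear_combination ih

theorem abs_succ_le_of_rec (ha0 : 0 ≤ a) (hY : ∀ n, Y (n + 1) = a * Y n + a * X (n + 1))
    (n : ℕ) : |Y (n + 1)| ≤ a * |Y n| + a * |X (n + 1)| := by
  rw [hY n]
  calc |a * Y n + a * X (n + 1)| ≤ |a * Y n| + |a * X (n + 1)| := abs_add_le _ _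
    _ = a * |Y n| + a * |X (n + 1)| := by rw [abs_mul, abs_mul, abs_of_nonneg ha0]

theorem one_sub_mul_sum_Icc_abs_le_of_rec (ha0 : 0 ≤ a)
    (hY : ∀ n, Y (n + 1) = a * Y n + a * X (n + 1)) (n : ℕ) :
    (1 - a) * ∑ j ∈ Icc 1 n, |Y j| + a * |Y n| ≤ a * |Y 0| + a * ∑ j ∈ Icc 1 n, |X j| := by
  induction n with
  | zero => simp
  | succ n ih =>
    have hstep := abs_succ_le_of_rec ha0 hY n
    rw [sum_Icc_succ_top (by omega), sum_Icc_succ_top (by omega)]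
    linarith

theorem tendsto_div_natCast_of_rec (ha0 : 0 ≤ a) (ha1 : a < 1)
    (hY : ∀ n, Y (n + 1) = a * Y n + a * X (n + 1)) {m : ℝ}
    (hX : Tendsto (fun n : ℕ => (∑ j ∈ Icc 1 n, X j) / n) atTop (𝓝 m)) :
    Tendsto (fun n : ℕ => Y n / n) atTop (𝓝 0) := by
  rw [tendsto_zero_iff_abs_tendsto_zero]
  have hXdiv : Tendsto (fun n : ℕ => a * |X (n + 1) / (n + 1)|) atTop (𝓝 0) := by
    simpa using (tendsto_div_succ_of_tendsto_avg hX).abs.const_mul a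
  refine tendsto_zero_of_le_mul_add ha0 ha1 (fun n => abs_nonneg _) ?_ hXdiv
  filter_upwards [eventually_gt_atTop 0] with n hn
  have hn' : (0 : ℝ) < n := by exact_mod_cast hn
  simp only [Function.comp, Nat.cast_add, Nat.cast_one, abs_div, Nat.abs_cast]
  rw [abs_of_pos (by positivity : (0 : ℝ) < n + 1)]
  calc |Y (n + 1)| / (n + 1)
      ≤ (a * |Y n| + a * |X (n + 1)|) / (n + 1) := by gcongr; exact abs_succ_le_of_rec ha0 hY n
    _ ≤ a * (|Y n| / n) + a * (|X (n + 1)| / (n + 1)) := by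
        rw [add_div, mul_div_assoc, mul_div_assoc]
        gcongr
        linarith

theorem tendsto_avg_of_rec (ha0 : 0 ≤ a) (ha1 : a < 1)
    (hY : ∀ n, Y (n + 1) = a * Y n + a * X (n + 1)) {m : ℝ}
    (hX : Tendsto (fun n : ℕ => (∑ j ∈ Icc 1 n, X j) / n) atTop (𝓝 m)) :
    Tendsto (fun n : ℕ => (1 / (n : ℝ)) * ∑ j ∈ Icc 1 n, Y j) atTop (𝓝 (a * m / (1 - a))) := by
  have hlim : Tendsto (fun n : ℕ => (a * Y 0 * (1 / (n : ℝ)) - a * (Y n / n)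
      + a * ((∑ j ∈ Icc 1 n, X j) / n)) / (1 - a)) atTop
      (𝓝 ((a * Y 0 * 0 - a * 0 + a * m) / (1 - a))) :=
    ((((tendsto_one_div_atTop_nhds_zero_nat).const_mul (a * Y 0)).sub
      ((tendsto_div_natCast_of_rec ha0 ha1 hY hX).const_mul a)).add (hX.const_mul a)).div_const _
  rw [mul_zero, mul_zero, zero_sub, neg_zero, zero_add] at hlim
  refine hlim.congr fun n => ?_
  rw [div_eq_iff (by linarith)]
  linear_combination (-1 / (n : ℝ)) * one_sub_mul_sum_Icc_of_rec hY n

theorem isBoundedUnder_le_avg_abs_and_limsup_le_of_rec (ha0 : 0 ≤ a) (ha1 : a < 1)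
    (hY : ∀ n, Y (n + 1) = a * Y n + a * X (n + 1)) {E : ℝ}
    (hX : Tendsto (fun n : ℕ => (∑ j ∈ Icc 1 n, |X j|) / n) atTop (𝓝 E)) :
    IsBoundedUnder (· ≤ ·) atTop (fun n : ℕ => (1 / (n : ℝ)) * ∑ j ∈ Icc 1 n, |Y j|) ∧
      limsup (fun n : ℕ => (1 / (n : ℝ)) * ∑ j ∈ Icc 1 n, |Y j|) atTop ≤ a * E / (1 - a) := by
  have hlim : Tendsto (fun n : ℕ => (a * |Y 0| * (1 / (n : ℝ))
      + a * ((∑ j ∈ Icc 1 n, |X j|) / n)) / (1 - a)) atTop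
      (𝓝 ((a * |Y 0| * 0 + a * E) / (1 - a))) :=
    (((tendsto_one_div_atTop_nhds_zero_nat).const_mul (a * |Y 0|)).add
      (hX.const_mul a)).div_const _
  rw [mul_zero, zero_add] at hlim
  refine isBoundedUnder_le_and_limsup_le_of_le_of_tendsto
    (fun n => by positivity) (fun n => ?_) hlim
  rw [le_div_iff₀ (by linarith)]
  calc (1 / (n : ℝ)) * (∑ j ∈ Icc 1 n, |Y j|) * (1 - a)
      ≤ 1 / n * ((1 - a) * ∑ j ∈ Icc 1 n, |Y j| + a * |Y n|) := by
        rw [mul_assoc, mul_comm _ (1 - a)]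
        gcongr
        exact le_add_of_nonneg_right (by positivity)
    _ ≤ 1 / n * (a * |Y 0| + a * ∑ j ∈ Icc 1 n, |X j|) :=
        mul_le_mul_of_nonneg_left (one_sub_mul_sum_Icc_abs_le_of_rec ha0 hY n) (by positivity)
    _ = a * |Y 0| * (1 / n) + a * ((∑ j ∈ Icc 1 n, |X j|) / n) := by ring

end Recursion

theorem ae_tendsto_avg_Icc_comp {Ω : Type*} [MeasurableSpace Ω] {P : Measure Ω}
    {x : ℕ → Ω → ℝ} (hindep : iIndepFun (fun i ω => x (i + 1) ω) P)
    (hident : ∀ i, 1 ≤ i → IdentDistrib (x i) (x 1) P P) {f : ℝ → ℝ} (hf : Measurable f)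
    (hint : Integrable (fun ω => f (x 1 ω)) P) :
    ∀ᵐ ω ∂P, Tendsto (fun n : ℕ => (∑ j ∈ Icc 1 n, f (x j ω)) / n) atTop
      (𝓝 (∫ ω, f (x 1 ω) ∂P)) := by
  have hslln := strong_law_ae_real (fun i ω => f (x (i + 1) ω)) hint
    (fun i j hij => (hindep.indepFun hij).comp hf hf)
    (fun i => (hident (i + 1) (by omega)).comp hf)
  filter_upwards [hslln] with ω hω
  simpa only [sum_Icc_one_eq_sum_range] using hω

theorem scalar_recursion_almost_sure_limits_general
    {Ω : Type} [MeasurableSpace Ω] (P : Measure Ω)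
    (a : ℝ) (ha0 : 0 < a) (ha1 : a < 1)
    (x : ℕ → Ω → ℝ)
    (hxint : Integrable (x 1) P)
    (hindep : iIndepFun (m := fun _ : ℕ => (inferInstance : MeasurableSpace ℝ))
      (fun (i : ℕ) (ω : Ω) => x (i + 1) ω) P)
    (hident : ∀ i : ℕ, 1 ≤ i → IdentDistrib (x i) (x 1) P P)
    (mx : ℝ) (hmx : ∫ ω, x 1 ω ∂P = mx)
    (y : ℕ → Ω → ℝ)
    (hy : ∀ (i : ℕ) (ω : Ω), y (i + 1) ω = a * y i ω + a * x (i + 1) ω) :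
    (∀ᵐ ω ∂P, Tendsto (fun (i : ℕ) => y i ω / (i : ℝ)) atTop (𝓝 0)) ∧
    (∀ᵐ ω ∂P, Tendsto (fun (i : ℕ) => (1 / (i : ℝ)) * ∑ j ∈ Finset.Icc 1 i, y j ω)
      atTop (𝓝 (a * mx / (1 - a)))) ∧
    (∀ᵐ ω ∂P,
      IsBoundedUnder (· ≤ ·) atTop
        (fun (i : ℕ) => (1 / (i : ℝ)) * ∑ j ∈ Finset.Icc 1 i, |y j ω|) ∧
      Filter.limsup (fun (i : ℕ) => (1 / (i : ℝ)) * ∑ j ∈ Finset.Icc 1 i, |y j ω|) atTop ≤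
        a * (∫ ω', |x 1 ω'| ∂P) / (1 - a)) := by
  have hslln := ae_tendsto_avg_Icc_comp hindep hident (f := fun r => r) measurable_id hxint
  rw [hmx] at hslln
  have hslln_abs := ae_tendsto_avg_Icc_comp hindep hident measurable_abs hxint.abs
  refine ⟨?_, ?_, ?_⟩ <;> filter_upwards [hslln, hslln_abs] with ω hω hω_abs
  · exact tendsto_div_natCast_of_rec ha0.le ha1 (hy · ω) hω
  · exact tendsto_avg_of_rec ha0.le ha1 (hy · ω) hω
  · exact isBoundedUnder_le_avg_abs_and_limsup_le_of_rec ha0.le ha1 (hy · ω) hω_abs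

theorem scalar_recursion_almost_sure_limits
    {Ω : Type} [MeasurableSpace Ω] (P : Measure Ω) [IsProbabilityMeasure P]
    (a : ℝ) (ha0 : 0 < a) (ha1 : a < 1)
    (x : ℕ → Ω → ℝ)
    (hxmeas : ∀ i, Measurable (x i))
    (hxint : Integrable (x 1) P)
    (hindep : iIndepFun (m := fun _ : ℕ => (inferInstance : MeasurableSpace ℝ))
      (fun (i : ℕ) (ω : Ω) => x (i + 1) ω) P)
    (hident : ∀ i : ℕ, 1 ≤ i → IdentDistrib (x i) (x 1) P P)
    (mx : ℝ) (hmx : ∫ ω, x 1 ω ∂P = mx)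
    (y : ℕ → Ω → ℝ) (y0 : ℝ)
    (hy0 : ∀ ω, y 0 ω = y0)
    (hy : ∀ (i : ℕ) (ω : Ω), y (i + 1) ω = a * y i ω + a * x (i + 1) ω) :
    (∀ᵐ ω ∂P, Tendsto (fun (i : ℕ) => y i ω / (i : ℝ)) atTop (𝓝 0)) ∧
    (∀ᵐ ω ∂P, Tendsto (fun (i : ℕ) => (1 / (i : ℝ)) * ∑ j ∈ Finset.Icc 1 i, y j ω)
      atTop (𝓝 (a * mx / (1 - a)))) ∧
    (∀ᵐ ω ∂P,
      IsBoundedUnder (· ≤ ·) atTop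
        (fun (i : ℕ) => (1 / (i : ℝ)) * ∑ j ∈ Finset.Icc 1 i, |y j ω|) ∧
      Filter.limsup (fun (i : ℕ) => (1 / (i : ℝ)) * ∑ j ∈ Finset.Icc 1 i, |y j ω|) atTop ≤
        a * (∫ ω', |x 1 ω'| ∂P) / (1 - a)) :=
  scalar_recursion_almost_sure_limits_general P a ha0 ha1 x hxint hindep hident mx hmx y hy
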